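/- Let d and s be positive integers, let G be a theta-free graph and let Y be a stable set in G of cardinality 3s(d+1). Let P be an induced path in G \ Y such that every vertex in Y has a neighbor in P, and each vertex of P has fewer than d neighbors in Y. Assume that for every two vertices y, y' ∈ Y there is an induced path R in G from y to y' such that V(P) and the interior of R are disjoint and anticomplete in G. Then there is a subset S of Y with |S| = s such that (P, S) is a consistent alignment. -/

import Mathlib

open SimpleGraph

namespace Paper

variable {V : Type}

/-- Two vertex sets are anticomplete: no edges between them. -/
def Anticomplete (G : SimpleGraph V) (A B : Set V) : Prop :=
  ∀ a ∈ A, ∀ b ∈ B, ¬ G.Adj a b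

/-- A stable (independent) set of vertices. -/
def StableSet (G : SimpleGraph V) (A : Set V) : Prop :=
  ∀ x ∈ A, ∀ y ∈ A, x ≠ y → ¬ G.Adj x y

/-- A walk is induced in `G`: any two adjacent vertices on it are consecutive. -/
def InducedWalk (G : SimpleGraph V) {u v : V} (P : G.Walk u v) : Prop :=
  ∀ x ∈ P.support, ∀ y ∈ P.support, G.Adj x y → s(x, y) ∈ P.edges

/-- The interior (set of internal vertices) of a walk from `u` to `v`. -/
def Interior {G : SimpleGraph V} {u v : V} (P : G.Walk u v) : Set V :=
  {w | w ∈ P.support ∧ w ≠ u ∧ w ≠ v}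

/-- Closed neighborhood of a set of vertices. -/
def ClosedNbhd (G : SimpleGraph V) (A : Set V) : Set V :=
  A ∪ {v | ∃ a ∈ A, G.Adj v a}

/-- Open neighborhood of a set of vertices. -/
def OpenNbhd (G : SimpleGraph V) (A : Set V) : Set V :=
  {v | v ∉ A ∧ ∃ a ∈ A, G.Adj v a}

/-- `M` separates `x` and `y` in `G`: there is a separation `(L, M, R)` with `x ∈ L`, `y ∈ R`. -/
def Separates (G : SimpleGraph V) (M : Set V) (x y : V) : Prop :=
  ∃ L R : Set V,
    L ∪ M ∪ R = Set.univ ∧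
    Disjoint L M ∧ Disjoint L R ∧ Disjoint M R ∧
    L.Nonempty ∧ R.Nonempty ∧ Anticomplete G L R ∧ x ∈ L ∧ y ∈ R

/-- `G` contains a theta as an induced subgraph. -/
def ContainsTheta (G : SimpleGraph V) : Prop :=
  ∃ (a b : V) (P₁ P₂ P₃ : G.Walk a b),
    a ≠ b ∧ ¬ G.Adj a b ∧
    P₁.IsPath ∧ P₂.IsPath ∧ P₃.IsPath ∧
    InducedWalk G P₁ ∧ InducedWalk G P₂ ∧ InducedWalk G P₃ ∧
    2 ≤ P₁.length ∧ 2 ≤ P₂.length ∧ 2 ≤ P₃.length ∧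
    Disjoint (Interior P₁) (Interior P₂) ∧
    Disjoint (Interior P₁) (Interior P₃) ∧
    Disjoint (Interior P₂) (Interior P₃) ∧
    Anticomplete G (Interior P₁) (Interior P₂) ∧
    Anticomplete G (Interior P₁) (Interior P₃) ∧
    Anticomplete G (Interior P₂) (Interior P₃)

/-- `G` contains a prism as an induced subgraph (one path may have length zero). -/
def ContainsPrism (G : SimpleGraph V) : Prop :=
  ∃ (a b : Fin 3 → V) (P : ∀ i, G.Walk (a i) (b i)),
    (∀ i j, i ≠ j → G.Adj (a i) (a j)) ∧
    (∀ i j, i ≠ j → G.Adj (b i) (b j)) ∧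
    (∀ i, (P i).IsPath) ∧ (∀ i, InducedWalk G (P i)) ∧
    (∀ i j, i ≠ j → ∀ x, x ∈ (P i).support → x ∉ (P j).support) ∧
    (∀ i j, i ≠ j → ∀ x ∈ (P i).support, ∀ y ∈ (P j).support,
        G.Adj x y → (x = a i ∧ y = a j) ∨ (x = b i ∧ y = b j)) ∧
    (∀ i j, i ≠ j → 2 ≤ (P i).length + (P j).length)

/-- `G` contains `K_{1,t}` as an induced subgraph. -/
def ContainsK1t (G : SimpleGraph V) (t : ℕ) : Prop :=
  ∃ (v : V) (S : Finset V),
    S.card = t ∧ v ∉ S ∧ (∀ x ∈ S, G.Adj v x) ∧ StableSet G ↑S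

/-- `G` belongs to the class `C_t` of (theta, prism, `K_{1,t}`)-free graphs. -/
def MemCt (t : ℕ) (G : SimpleGraph V) : Prop :=
  ¬ ContainsTheta G ∧ ¬ ContainsPrism G ∧ ¬ ContainsK1t G t

/-- A tree decomposition of `G`. -/
structure TreeDecomp (G : SimpleGraph V) where
  ι : Type
  T : SimpleGraph ι
  isTree : T.IsTree
  bag : ι → Set V
  mem_bag : ∀ v : V, ∃ i, v ∈ bag i
  edge_bag : ∀ u v : V, G.Adj u v → ∃ i, u ∈ bag i ∧ v ∈ bag i
  bag_connected : ∀ v : V, (T.induce {i | v ∈ bag i}).Connected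

/-- The tree independence number of `G` is at most `k`. -/
def TreeAlphaLE (G : SimpleGraph V) (k : ℕ) : Prop :=
  ∃ D : TreeDecomp G, ∀ i : D.ι, ∀ S : Finset V,
    ↑S ⊆ D.bag i → StableSet G ↑S → S.card ≤ k

/-- Sum of weights over a vertex set. -/
noncomputable def wSum [Fintype V] (w : V → ℝ) (A : Set V) : ℝ :=
  ∑ v, A.indicator w v

/-- `D` is a connected component of `G \ X`. -/
def IsComponentOf (G : SimpleGraph V) (X D : Set V) : Prop :=
  D.Nonempty ∧ D ⊆ Xᶜ ∧ (G.induce D).Connected ∧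
  ∀ D' : Set V, D ⊆ D' → D' ⊆ Xᶜ → (G.induce D').Connected → D' = D

/-- `X` is a `w`-balanced separator in `G`. -/
def BalancedSeparator [Fintype V] (G : SimpleGraph V) (w : V → ℝ) (X : Set V) : Prop :=
  ∀ D : Set V, IsComponentOf G X D → wSum w D ≤ 1 / 2

/-- A closed walk is a hole (induced cycle of length at least four) in `G`. -/
def IsHoleWalk (G : SimpleGraph V) {h : V} (H : G.Walk h h) : Prop :=
  H.IsCycle ∧ 4 ≤ H.length ∧ InducedWalk G H

/-- The neighbors of `c` on the hole `H`. -/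
def HoleNbrs (G : SimpleGraph V) {h : V} (H : G.Walk h h) (c : V) : Set V :=
  {v | v ∈ H.support ∧ G.Adj c v}

/-- `(H, c)` is a wheel in `G`. -/
def IsWheel (G : SimpleGraph V) {h : V} (H : G.Walk h h) (c : V) : Prop :=
  IsHoleWalk G H ∧ c ∉ H.support ∧ 3 ≤ (HoleNbrs G H c).ncard

/-- `P` is a sector of the wheel `(H, c)`. -/
def IsSector (G : SimpleGraph V) {h : V} (H : G.Walk h h) (c : V)
    {x y : V} (P : G.Walk x y) : Prop :=
  P.IsPath ∧ 0 < P.length ∧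
  (∀ w ∈ P.support, w ∈ H.support) ∧
  (∀ e ∈ P.edges, e ∈ H.edges) ∧
  G.Adj c x ∧ G.Adj c y ∧
  ∀ w ∈ P.support, w ≠ x → w ≠ y → ¬ G.Adj c w

/-- The wheel `(H, c)` is special. -/
def IsSpecialWheel (G : SimpleGraph V) {h : V} (H : G.Walk h h) (c : V) : Prop :=
  IsWheel G H c ∧ ∃ a b d : V,
    a ≠ b ∧ a ≠ d ∧ b ≠ d ∧
    HoleNbrs G H c = {a, b, d} ∧
    s(a, b) ∈ H.edges ∧ s(a, d) ∉ H.edges ∧ s(b, d) ∉ H.edges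

/-- `Z(W)` for a non-special wheel `W = (H, c)`. -/
def ZNonSpecial (G : SimpleGraph V) {h : V} (H : G.Walk h h) (c : V) : Set V :=
  {c} ∪ HoleNbrs G H c

/-- `Z(W)` for a special wheel `W = (H, c)` with length-one sector `ab` and third neighbor `d`. -/
def ZSpecial (G : SimpleGraph V) {h : V} (H : G.Walk h h) (c a b d : V) : Set V :=
  ({a, b, c, d} : Set V) ∪ {v | s(v, d) ∈ H.edges}

/-- A pyramid in `G` with apex `apx`, base `b 0, b 1, b 2` and paths `P i`. -/
def IsPyramid (G : SimpleGraph V) (apx : V) (b : Fin 3 → V)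
    (P : ∀ i, G.Walk apx (b i)) : Prop :=
  (∀ i, b i ≠ apx) ∧
  (∀ i j, i ≠ j → G.Adj (b i) (b j)) ∧
  (∀ i, (P i).IsPath) ∧ (∀ i, InducedWalk G (P i)) ∧
  (∀ i, 1 ≤ (P i).length) ∧
  (∀ i j, i ≠ j → ∀ x, x ∈ (P i).support → x ∈ (P j).support → x = apx) ∧
  (∀ i j, i ≠ j → ∀ x ∈ (P i).support, ∀ y ∈ (P j).support,
      x ≠ apx → y ≠ apx → G.Adj x y → x = b i ∧ y = b j) ∧
  (∀ i j, i ≠ j → 3 ≤ (P i).length + (P j).length)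

/-- `Z(Σ)` for a pyramid. -/
def ZPyramid (G : SimpleGraph V) (apx : V) (b : Fin 3 → V)
    (P : ∀ i, G.Walk apx (b i)) : Set V :=
  {apx} ∪ {v | (∃ i, v ∈ (P i).support) ∧ G.Adj apx v} ∪ Set.range b

/-- `x : Fin k → V` enumerates `X` in an order witnessing that `(P, X)` is an alignment. -/
def AlignmentOrder (G : SimpleGraph V) {p q : V} (P : G.Walk p q)
    (X : Finset V) {k : ℕ} (x : Fin k → V) : Prop :=
  Function.Injective x ∧ (∀ l, x l ∈ X) ∧ (∀ z ∈ X, ∃ l, x l = z) ∧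
  ∃ lo hi : Fin k → ℕ,
    (∀ l, lo l ≤ hi l) ∧
    (∀ l m : Fin k, l < m → hi l < lo m) ∧
    (∀ l, hi l < P.support.length) ∧
    ∀ (l : Fin k) (n : Fin P.support.length),
      G.Adj (x l) (P.support.get n) → lo l ≤ (n : ℕ) ∧ (n : ℕ) ≤ hi l

/-- `(P, X)` is an alignment. -/
def IsAlignment (G : SimpleGraph V) {p q : V} (P : G.Walk p q) (X : Finset V) : Prop :=
  (∀ z ∈ X, z ∉ P.support) ∧
  (∀ z ∈ X, ∃ u ∈ P.support, G.Adj z u) ∧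
  ∃ (k : ℕ) (x : Fin k → V), AlignmentOrder G P X x

/-- Every vertex of `X` has two non-adjacent neighbors in `P`. -/
def WideAl (G : SimpleGraph V) {p q : V} (P : G.Walk p q) (X : Finset V) : Prop :=
  ∀ z ∈ X, ∃ u v : V, u ∈ P.support ∧ v ∈ P.support ∧
    G.Adj z u ∧ G.Adj z v ∧ u ≠ v ∧ ¬ G.Adj u v

/-- Every vertex of `X` has a unique neighbor in `P`. -/
def SpikyAl (G : SimpleGraph V) {p q : V} (P : G.Walk p q) (X : Finset V) : Prop :=
  ∀ z ∈ X, ∃! u : V, u ∈ P.support ∧ G.Adj z u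

/-- Every vertex of `X` has exactly two neighbors in `P`, and they are adjacent. -/
def TriangularAl (G : SimpleGraph V) {p q : V} (P : G.Walk p q) (X : Finset V) : Prop :=
  ∀ z ∈ X, ∃ u v : V, u ∈ P.support ∧ v ∈ P.support ∧
    G.Adj z u ∧ G.Adj z v ∧ u ≠ v ∧ G.Adj u v ∧
    ∀ w ∈ P.support, G.Adj z w → w = u ∨ w = v

/-- `(P, X)` is a consistent alignment. -/
def ConsistentAlignment (G : SimpleGraph V) {p q : V} (P : G.Walk p q) (X : Finset V) : Prop :=
  IsAlignment G P X ∧ (WideAl G P X ∨ SpikyAl G P X ∨ TriangularAl G P X)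

/-- A branch vertex of a graph: a vertex of degree at least three. -/
def BranchVtx {W : Type} (T : SimpleGraph W) (v : W) : Prop :=
  3 ≤ (T.neighborSet v).ncard

/-- `T` is a caterpillar: a tree of maximum degree three, no two branch vertices adjacent,
and some path contains all branch vertices. -/
def IsCaterpillar {W : Type} (T : SimpleGraph W) : Prop :=
  T.IsTree ∧ (∀ v, (T.neighborSet v).ncard ≤ 3) ∧
  (∀ u v, BranchVtx T u → BranchVtx T v → ¬ T.Adj u v) ∧
  ∃ (x y : W) (P : T.Walk x y), P.IsPath ∧ ∀ v, BranchVtx T v → v ∈ P.support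

/-- `T` is a subdivided star with root `r`. -/
def IsSubdividedStar {W : Type} (T : SimpleGraph W) (r : W) : Prop :=
  T.IsTree ∧ 3 ≤ (T.neighborSet r).ncard ∧ ∀ v, v ≠ r → (T.neighborSet v).ncard ≤ 2

/-- `H` is isomorphic to the line graph of a caterpillar. -/
def IsLineCaterpillar {U : Type} (H : SimpleGraph U) : Prop :=
  ∃ (W : Type) (T : SimpleGraph W), IsCaterpillar T ∧ Nonempty (H ≃g T.lineGraph)

/-- `H` is isomorphic to the line graph of a subdivided star. -/
def IsLineSubdividedStar {U : Type} (H : SimpleGraph U) : Prop :=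
  ∃ (W : Type) (T : SimpleGraph W) (r : W),
    IsSubdividedStar T r ∧ Nonempty (H ≃g T.lineGraph)

/-- `v` is a simplicial vertex of `G[S]`. -/
def SimplicialIn (G : SimpleGraph V) (S : Set V) (v : V) : Prop :=
  v ∈ S ∧ ∀ u ∈ S, ∀ w ∈ S, G.Adj v u → G.Adj v w → u ≠ w → G.Adj u w

/-- `G[S]` is one of the four connectifier shapes. -/
def ConnType (G : SimpleGraph V) (S : Set V) : Prop :=
  IsCaterpillar (G.induce S) ∨ IsLineCaterpillar (G.induce S) ∨
  (∃ r, IsSubdividedStar (G.induce S) r) ∨ IsLineSubdividedStar (G.induce S)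

/-- `(G[S], X)` is a connectifier. -/
def IsConnectifier (G : SimpleGraph V) (S : Set V) (X : Finset V) : Prop :=
  (∀ z ∈ X, (z : V) ∉ S) ∧ (∀ z ∈ X, ∃ r ∈ S, G.Adj z r) ∧
  ( (∃ v, S = {v}) ∨
    ( ConnType G S ∧
      (∀ z ∈ X, ∀ r₁ ∈ S, ∀ r₂ ∈ S, G.Adj z r₁ → G.Adj z r₂ → r₁ = r₂) ∧
      (∀ z ∈ X, ∀ r ∈ S, G.Adj z r → SimplicialIn G S r) ∧
      (∀ v, SimplicialIn G S v → ∃ z ∈ X, G.Adj z v) ) )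

/-- The connectifier `(G[S], X)` is concentrated. -/
def Concentrated (G : SimpleGraph V) (S : Set V) : Prop :=
  (∃ v, S = {v}) ∨ (∃ r, IsSubdividedStar (G.induce S) r) ∨
  IsLineSubdividedStar (G.induce S)

/-- Reachability inside a vertex set `A`. -/
def Reaches (G : SimpleGraph V) (A : Set V) (u v : V) : Prop :=
  ∃ (w : G.Walk u v), ∀ z ∈ w.support, z ∈ A

/-- `Pw` is a spine of the caterpillar `G[S]`: a maximal path containing all branch vertices. -/
def IsSpineOf (G : SimpleGraph V) (S : Set V) {p q : V} (Pw : G.Walk p q) : Prop :=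
  Pw.IsPath ∧ (∀ w ∈ Pw.support, w ∈ S) ∧
  (∀ v ∈ S, 3 ≤ ({u | u ∈ S ∧ G.Adj v u}).ncard → v ∈ Pw.support) ∧
  ∀ (p' q' : V) (P' : G.Walk p' q'), P'.IsPath → (∀ w ∈ P'.support, w ∈ S) →
    (∀ w ∈ Pw.support, w ∈ P'.support) → ∀ w ∈ P'.support, w ∈ Pw.support

/-- `Pw` realizes `P(H)` for `H = G[S]`, when `H` is a caterpillar or the line graph
of a caterpillar. -/
def IsPHOf (G : SimpleGraph V) (S : Set V) {p q : V} (Pw : G.Walk p q) : Prop :=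
  Pw.IsPath ∧ (∀ w ∈ Pw.support, w ∈ S) ∧
  ( (IsCaterpillar (G.induce S) ∧ IsSpineOf G S Pw) ∨
    (∃ (W : Type) (T : SimpleGraph W) (φ : T.lineGraph ≃g G.induce S)
        (x y : W) (Q : T.Walk x y),
      IsCaterpillar T ∧ Q.IsPath ∧
      (∀ v, BranchVtx T v → v ∈ Q.support) ∧
      (∀ (x' y' : W) (Q' : T.Walk x' y'), Q'.IsPath →
        (∀ w ∈ Q.support, w ∈ Q'.support) → ∀ w ∈ Q'.support, w ∈ Q.support) ∧
      {w | w ∈ Pw.support} = {v : V | ∃ e : T.edgeSet, (e : Sym2 W) ∈ Q.edges ∧ ↑(φ e) = v}) )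

/-- `x` enumerates `X` in the order given by the (non-concentrated) connectifier `(G[S], X)`
with central path `Pw = P(H)`. -/
def ConnectifierOrder (G : SimpleGraph V) (S : Set V) (X : Finset V)
    {p q : V} (Pw : G.Walk p q) {k : ℕ} (x : Fin k → V) : Prop :=
  Function.Injective x ∧ (∀ l, x l ∈ X) ∧ (∀ z ∈ X, ∃ l, x l = z) ∧
  ∃ (s : Fin k → V) (lo hi : Fin k → ℕ),
    (∀ l, lo l ≤ hi l) ∧ (∀ l m : Fin k, l < m → hi l < lo m) ∧
    (∀ l, hi l < Pw.support.length) ∧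
    (∀ (l : Fin k) (n : Fin Pw.support.length),
      G.Adj (s l) (Pw.support.get n) → lo l ≤ (n : ℕ) ∧ (n : ℕ) ≤ hi l) ∧
    ∀ l : Fin k, s l ∈ S ∧ s l ∉ Pw.support ∧ (∃ u ∈ Pw.support, G.Adj (s l) u) ∧
      ∀ r ∈ S, G.Adj (x l) r → Reaches G (S \ {w | w ∈ Pw.support}) r (s l)

/-- `(G[S], X)` is a consistent alignment (with `G[S]` a path). -/
def ConsistentAlignmentSet (G : SimpleGraph V) (S : Set V) (X : Finset V) : Prop :=
  ∃ (p q : V) (Pw : G.Walk p q), Pw.IsPath ∧ InducedWalk G Pw ∧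
    {w | w ∈ Pw.support} = S ∧ ConsistentAlignment G Pw X

/-- The orders on `X` given by `(D1, X)` and by `(G[S], X)` coincide. -/
def OrdersAgree (G : SimpleGraph V) {p q : V} (D1w : G.Walk p q)
    (S : Set V) (X : Finset V) : Prop :=
  ∃ (k : ℕ) (x : Fin k → V),
    AlignmentOrder G D1w X x ∧
    ( (∃ (p' q' : V) (Pw : G.Walk p' q'), IsPHOf G S Pw ∧ ConnectifierOrder G S X Pw x) ∨
      (∃ (p' q' : V) (Pw : G.Walk p' q'), Pw.IsPath ∧ InducedWalk G Pw ∧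
        {w | w ∈ Pw.support} = S ∧ AlignmentOrder G Pw X x) )

/-- `(D1, Y, D2)` is an `s`-trisection of `G`, where `D1` is (the support of) the path `D1w`. -/
def IsTrisection (G : SimpleGraph V) (s : ℕ) {p q : V} (D1w : G.Walk p q)
    (Y D2 : Set V) : Prop :=
  D1w.IsPath ∧ InducedWalk G D1w ∧
  (∀ w ∈ D1w.support, w ∉ Y ∧ w ∉ D2) ∧ Disjoint Y D2 ∧
  ({w | w ∈ D1w.support} ∪ Y ∪ D2 = Set.univ) ∧
  D2.Nonempty ∧
  (∀ a ∈ D1w.support, ∀ b ∈ D2, ¬ G.Adj a b) ∧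
  StableSet G Y ∧ Y.ncard = s ∧
  OpenNbhd G {w | w ∈ D1w.support} = Y ∧ OpenNbhd G D2 = Y ∧
  (∀ y ∈ Y, ∃ d ∈ D1w.support, ∀ z ∈ Y, (G.Adj d z ↔ z = y))

/-- The conclusion of amiability for the trisection `(D1w, Y, D2)` with parameter `x`:
the pair `(G[S], X)` is "given by amiability". -/
def AmiableOutcome (G : SimpleGraph V) {p q : V} (D1w : G.Walk p q)
    (Y D2 : Set V) (x : ℕ) (S : Set V) (X : Finset V) : Prop :=
  S ⊆ D2 ∧ ↑X ⊆ Y ∧ X.card = x ∧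
  ConsistentAlignment G D1w X ∧
  (IsConnectifier G S X ∨ ConsistentAlignmentSet G S X) ∧
  (¬ (IsConnectifier G S X ∧ Concentrated G S) → OrdersAgree G D1w S X)

/-!
For `y ∈ Y` let `m y ≤ M y` be the first and last positions of its neighbours on `P`.
If `y` and `y'` both attach to `P` inside `[a, c]` and again inside `[e, f]` with `c + 2 ≤ e`,
then induced `y`–`y'` paths through these two segments, together with the path `R`
avoiding `P`, form a theta. Hence if `y'` is wide (`m y' + 2 ≤ M y'`) and `m y ≤ m y'`, then
`M y ≤ m y' + 1`.

Split `Y` into spiky (`M = m`), triangular (`M = m + 1`) and wide vertices. Repeatedly keeping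
the interval `[m y, M y]` with the smallest right end and discarding the intervals through that
end, a class of more than `(s - 1) B` vertices yields `s` disjoint, increasing intervals, that is
an alignment, where `B` bounds the number of intervals of the class through a right end: `d - 1`
for the first two classes by the degree bound, and `3` for the wide class by the above.
As `|Y| = 3s(d + 1)`, one of the classes is large enough.
-/

open Finset

variable {G : SimpleGraph V}

namespace InducedWalk

lemma reverse {u v : V} {W : G.Walk u v} (hW : InducedWalk G W) : InducedWalk G W.reverse := by
  intro x hx z hz hadj
  rw [Walk.support_reverse, List.mem_reverse] at hx hz
  rw [Walk.edges_reverse, List.mem_reverse]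
  exact hW x hx z hz hadj

lemma cons {u v w : V} {W : G.Walk v w} (hW : InducedWalk G W) (h : G.Adj u v)
    (hu : ∀ x ∈ W.support, G.Adj u x → x = v) : InducedWalk G (Walk.cons h W) := by
  intro x hx z hz hadj
  rw [Walk.support_cons, List.mem_cons] at hx hz
  rw [Walk.edges_cons, List.mem_cons]
  rcases hx with rfl | hx <;> rcases hz with rfl | hz
  · exact absurd rfl hadj.ne
  · exact Or.inl (by rw [hu z hz hadj])
  · exact Or.inl (by rw [hu x hx hadj.symm, Sym2.eq_swap])
  · exact Or.inr (hW x hx z hz hadj)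

lemma concat {u v w : V} {W : G.Walk u v} (hW : InducedWalk G W) (h : G.Adj v w)
    (hw : ∀ x ∈ W.support, G.Adj w x → x = v) : InducedWalk G (W.concat h) := by
  have := (hW.reverse.cons h.symm (by simpa using hw)).reverse
  rwa [← Walk.reverse_concat, Walk.reverse_reverse] at this

lemma of_getVert {u v : V} (W : G.Walk u v)
    (h : ∀ i ≤ W.length, ∀ j ≤ W.length, G.Adj (W.getVert i) (W.getVert j) →
      j = i + 1 ∨ i = j + 1) : InducedWalk G W := by
  intro x hx z hz hadj
  obtain ⟨i, rfl, hi⟩ := Walk.mem_support_iff_exists_getVert.1 hx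
  obtain ⟨j, rfl, hj⟩ := Walk.mem_support_iff_exists_getVert.1 hz
  rcases h i hi j hj hadj with rfl | rfl
  · rw [← Walk.getElem_edges (by rw [Walk.length_edges]; omega)]
    exact List.getElem_mem _
  · rw [Sym2.eq_swap, ← Walk.getElem_edges (by rw [Walk.length_edges]; omega)]
    exact List.getElem_mem _

lemma eq_add_one_or_of_adj_getVert {u v : V} {W : G.Walk u v} (hW : InducedWalk G W)
    (hpath : W.IsPath) {i j : ℕ} (hi : i ≤ W.length) (hj : j ≤ W.length)
    (hadj : G.Adj (W.getVert i) (W.getVert j)) : j = i + 1 ∨ i = j + 1 := by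
  obtain ⟨k, hk, he⟩ := List.mem_iff_getElem.1
    (hW _ (W.getVert_mem_support i) _ (W.getVert_mem_support j) hadj)
  rw [Walk.getElem_edges, Sym2.eq_iff] at he
  rw [Walk.length_edges] at hk
  have inj := hpath.getVert_injOn
  rcases he with ⟨h₁, h₂⟩ | ⟨h₁, h₂⟩
  · have := inj (show k ≤ W.length by omega) hi h₁
    have := inj (show k + 1 ≤ W.length by omega) hj h₂
    omega
  · have := inj (show k ≤ W.length by omega) hj h₁
    have := inj (show k + 1 ≤ W.length by omega) hi h₂
    omega

lemma not_adj_getVert {u v : V} {W : G.Walk u v} (hW : InducedWalk G W) (hpath : W.IsPath)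
    {i j : ℕ} (hij : i + 2 ≤ j) (hj : j ≤ W.length) : ¬ G.Adj (W.getVert i) (W.getVert j) :=
  fun hadj => by have := hW.eq_add_one_or_of_adj_getVert hpath (by omega) hj hadj; omega

end InducedWalk

lemma two_le_length_of_not_adj {u v : V} (W : G.Walk u v) (hne : u ≠ v) (hnadj : ¬ G.Adj u v) :
    2 ≤ W.length := by
  rcases W with _ | ⟨h, _ | ⟨_, _⟩⟩
  · exact absurd rfl hne
  · exact absurd h hnadj
  · simp

lemma interior_reverse {u v : V} (W : G.Walk u v) : Interior W.reverse = Interior W := by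
  ext w
  simp only [Interior, Set.mem_ofPred_eq, Walk.support_reverse, List.mem_reverse]
  tauto

lemma interior_cons_concat_subset {u v w x : V} (W : G.Walk v w) (h : G.Adj u v)
    (h' : G.Adj w x) : Interior (Walk.cons h (W.concat h')) ⊆ {y | y ∈ W.support} := by
  rintro y ⟨hy, hyu, hyx⟩
  simp only [Walk.support_cons, Walk.support_concat, List.mem_cons, List.mem_append] at hy
  tauto

lemma exists_walk_getVert_eq {u v : V} (f : ℕ → V) (n : ℕ) (h₀ : f 0 = u) (hn : f n = v)
    (hf : ∀ k < n, G.Adj (f k) (f (k + 1))) :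
    ∃ W : G.Walk u v, W.length = n ∧ ∀ k ≤ n, W.getVert k = f k := by
  subst h₀ hn
  induction n with
  | zero => exact ⟨Walk.nil, rfl, fun k hk => by rw [Nat.le_zero.1 hk]; rfl⟩
  | succ n ih =>
    obtain ⟨W, hlen, hget⟩ := ih fun k hk => hf k (by omega)
    refine ⟨W.concat (hf n (by omega)), by simp [hlen], fun k hk => ?_⟩
    rw [Walk.concat_eq_append, Walk.getVert_append]
    split_ifs with hk'
    · exact hget k (by omega)
    · obtain rfl | rfl : k = n ∨ k = n + 1 := by omega
      all_goals simp [hlen]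

lemma exists_closest_pair (A B : ℕ → Prop) {a c : ℕ} (hac : a ≤ c) (ha : A a) (hc : B c) :
    ∃ a' c', a ≤ a' ∧ a' ≤ c' ∧ c' ≤ c ∧ A a' ∧ B c' ∧
      (∀ k, a' < k → k ≤ c' → ¬ A k) ∧ (∀ k, a' ≤ k → k < c' → ¬ B k) := by
  classical
  have hB : ∃ k, a ≤ k ∧ B k := ⟨c, hac, hc⟩
  obtain ⟨hac', hBc'⟩ := Nat.find_spec hB
  obtain ⟨haa', hAa'⟩ : a ≤ Nat.findGreatest (fun k => a ≤ k ∧ A k) (Nat.find hB) ∧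
      A (Nat.findGreatest (fun k => a ≤ k ∧ A k) (Nat.find hB)) :=
    Nat.findGreatest_spec (P := fun k => a ≤ k ∧ A k) hac' ⟨le_rfl, ha⟩
  refine ⟨_, _, haa', Nat.findGreatest_le _, Nat.find_min' hB ⟨hac, hc⟩, hAa', hBc',
    fun k hk hkc hAk => Nat.findGreatest_is_greatest hk hkc ⟨by omega, hAk⟩,
    fun k hk hkc hBk => Nat.find_min hB hkc ⟨by omega, hBk⟩⟩

section Segment

variable {p q : V} {P : G.Walk p q}

lemma exists_induced_subpath (hP : P.IsPath) (hind : InducedWalk G P) {a c : ℕ} (hac : a ≤ c)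
    (hc : c ≤ P.length) :
    ∃ S : G.Walk (P.getVert a) (P.getVert c), S.IsPath ∧ InducedWalk G S ∧
      ∀ x ∈ S.support, x ∈ P.getVert '' Set.Icc a c := by
  obtain ⟨S, hlen, hget⟩ := exists_walk_getVert_eq (u := P.getVert a) (v := P.getVert c)
    (fun k => P.getVert (a + k)) (c - a) rfl (by congr 1; omega)
    fun k hk => P.adj_getVert_succ (by omega)
  refine ⟨S, (Walk.IsPath.getVert_injOn_iff S).1 fun i hi j hj hij => ?_,
    InducedWalk.of_getVert S fun i hi j hj hadj => ?_, fun x hx => ?_⟩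
  · simp only [Set.mem_ofPred_eq] at hi hj
    rw [hget i (by omega), hget j (by omega)] at hij
    have := hP.getVert_injOn (show a + i ≤ P.length by omega) (show a + j ≤ P.length by omega) hij
    omega
  · rw [hget i (by omega), hget j (by omega)] at hadj
    have := hind.eq_add_one_or_of_adj_getVert hP (by omega) (by omega) hadj
    omega
  · obtain ⟨k, rfl, hk⟩ := Walk.mem_support_iff_exists_getVert.1 hx
    exact ⟨a + k, ⟨by omega, by omega⟩, (hget k (by omega)).symm⟩

lemma exists_inducedPath_of_closest_attachments (hP : P.IsPath) (hind : InducedWalk G P)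
    {y y' : V} (hy : y ∉ P.support) (hy' : y' ∉ P.support) (hne : y ≠ y')
    (hnadj : ¬ G.Adj y y') {a c : ℕ} (hac : a ≤ c) (hc : c ≤ P.length)
    (ha : G.Adj y (P.getVert a)) (hc' : G.Adj (P.getVert c) y')
    (hya : ∀ k, a < k → k ≤ c → ¬ G.Adj y (P.getVert k))
    (hy'c : ∀ k, a ≤ k → k < c → ¬ G.Adj y' (P.getVert k)) :
    ∃ Q : G.Walk y y', Q.IsPath ∧ InducedWalk G Q ∧ 2 ≤ Q.length ∧
      Interior Q ⊆ P.getVert '' Set.Icc a c := by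
  obtain ⟨S, hSpath, hSind, hS⟩ := exists_induced_subpath hP hind hac hc
  have hSP : ∀ x ∈ S.support, x ∈ P.support := by
    intro x hx
    obtain ⟨k, -, rfl⟩ := hS x hx
    exact P.getVert_mem_support k
  refine ⟨Walk.cons ha (S.concat hc'), ?_, ?_, by simp,
    (interior_cons_concat_subset S ha hc').trans hS⟩
  · rw [Walk.cons_isPath_iff, Walk.concat_isPath_iff, Walk.support_concat]
    simp only [List.mem_append, List.mem_singleton, not_or]
    exact ⟨⟨hSpath, fun h => hy' (hSP _ h)⟩, fun h => hy (hSP _ h), hne⟩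
  · refine (hSind.concat hc' fun x hx hadj => ?_).cons ha fun x hx hadj => ?_
    · obtain ⟨k, ⟨hak, hkc⟩, rfl⟩ := hS x hx
      obtain rfl | hlt := eq_or_lt_of_le hkc
      · rfl
      · exact absurd hadj (hy'c k hak hlt)
    · rw [Walk.support_concat, List.mem_append, List.mem_singleton] at hx
      obtain hx | rfl := hx
      · obtain ⟨k, ⟨hak, hkc⟩, rfl⟩ := hS x hx
        obtain rfl | hlt := eq_or_lt_of_le hak
        · rfl
        · exact absurd hadj (hya k hlt hkc)
      · exact absurd hadj hnadj

lemma exists_inducedPath_through_segment (hP : P.IsPath) (hind : InducedWalk G P)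
    {y y' : V} (hy : y ∉ P.support) (hy' : y' ∉ P.support) (hne : y ≠ y')
    (hnadj : ¬ G.Adj y y') {a c : ℕ} (hac : a ≤ c) (hc : c ≤ P.length)
    (ha : G.Adj y (P.getVert a)) (hc' : G.Adj y' (P.getVert c)) :
    ∃ Q : G.Walk y y', Q.IsPath ∧ InducedWalk G Q ∧ 2 ≤ Q.length ∧
      Interior Q ⊆ P.getVert '' Set.Icc a c := by
  obtain ⟨a', c', haa', hac', hc'c, ha', hc'', hya, hy'c⟩ :=
    exists_closest_pair (fun k => G.Adj y (P.getVert k)) (fun k => G.Adj y' (P.getVert k))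
      hac ha hc'
  obtain ⟨Q, hQ, hQind, hQlen, hQint⟩ := exists_inducedPath_of_closest_attachments hP hind
    hy hy' hne hnadj hac' (by omega) ha' hc''.symm hya hy'c
  exact ⟨Q, hQ, hQind, hQlen, hQint.trans (Set.image_mono (Set.Icc_subset_Icc haa' hc'c))⟩

end Segment

section Theta

variable {p q : V} {P : G.Walk p q}

def LinkedOff (G : SimpleGraph V) {p q : V} (P : G.Walk p q) (y y' : V) : Prop :=
  ∃ R : G.Walk y y', R.IsPath ∧ InducedWalk G R ∧ (∀ w ∈ Interior R, w ∉ P.support) ∧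
    ∀ w ∈ Interior R, ∀ u ∈ P.support, ¬ G.Adj w u

lemma containsTheta_of_separated_segments (hP : P.IsPath) (hind : InducedWalk G P)
    {y y' : V} (hne : y ≠ y') (hnadj : ¬ G.Adj y y') (hR : LinkedOff G P y y')
    {Q₁ Q₂ : G.Walk y y'} (hQ₁ : Q₁.IsPath ∧ InducedWalk G Q₁ ∧ 2 ≤ Q₁.length)
    (hQ₂ : Q₂.IsPath ∧ InducedWalk G Q₂ ∧ 2 ≤ Q₂.length) {a c e f : ℕ}
    (h₁ : Interior Q₁ ⊆ P.getVert '' Set.Icc a c) (h₂ : Interior Q₂ ⊆ P.getVert '' Set.Icc e f)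
    (hce : c + 2 ≤ e) (hf : f ≤ P.length) : ContainsTheta G := by
  obtain ⟨R, hR, hRind, hRdisj, hRanti⟩ := hR
  have hsupp : ∀ i j, P.getVert '' Set.Icc i j ⊆ {w | w ∈ P.support} := by
    rintro i j _ ⟨k, -, rfl⟩
    exact P.getVert_mem_support k
  refine ⟨y, y', Q₁, Q₂, R, hne, hnadj, hQ₁.1, hQ₂.1, hR, hQ₁.2.1, hQ₂.2.1, hRind, hQ₁.2.2,
    hQ₂.2.2, two_le_length_of_not_adj R hne hnadj, ?_, ?_, ?_, ?_, ?_, ?_⟩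
  · refine Set.disjoint_left.2 fun w hw₁ hw₂ => ?_
    obtain ⟨k, hk, rfl⟩ := h₁ hw₁
    obtain ⟨k', hk', hkk'⟩ := h₂ hw₂
    have := hP.getVert_injOn (show k' ≤ P.length by grind) (show k ≤ P.length by grind) hkk'
    grind
  · exact Set.disjoint_left.2 fun w hw hwR => hRdisj w hwR (hsupp a c (h₁ hw))
  · exact Set.disjoint_left.2 fun w hw hwR => hRdisj w hwR (hsupp e f (h₂ hw))
  · intro w hw w' hw'
    obtain ⟨k, hk, rfl⟩ := h₁ hw
    obtain ⟨k', hk', rfl⟩ := h₂ hw'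
    exact hind.not_adj_getVert hP (by grind) (by grind)
  · exact fun w hw w' hw' hadj => hRanti w' hw' w (hsupp a c (h₁ hw)) hadj.symm
  · exact fun w hw w' hw' hadj => hRanti w' hw' w (hsupp e f (h₂ hw)) hadj.symm

lemma containsTheta_of_separated_attachments (hP : P.IsPath) (hind : InducedWalk G P)
    {y y' : V} (hy : y ∉ P.support) (hy' : y' ∉ P.support) (hne : y ≠ y')
    (hnadj : ¬ G.Adj y y') (hR : LinkedOff G P y y') {a c e f : ℕ} (hac : a ≤ c)
    (hce : c + 2 ≤ e) (hef : e ≤ f) (hf : f ≤ P.length)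
    (ha : G.Adj y (P.getVert a)) (hc : G.Adj y' (P.getVert c))
    (hattach : G.Adj y (P.getVert e) ∧ G.Adj y' (P.getVert f) ∨
      G.Adj y' (P.getVert e) ∧ G.Adj y (P.getVert f)) : ContainsTheta G := by
  obtain ⟨Q₁, hQ₁, hQ₁ind, hQ₁len, hQ₁int⟩ :=
    exists_inducedPath_through_segment hP hind hy hy' hne hnadj hac (by omega) ha hc
  obtain ⟨Q₂, hQ₂, hQ₂ind, hQ₂len, hQ₂int⟩ :
      ∃ Q : G.Walk y y', Q.IsPath ∧ InducedWalk G Q ∧ 2 ≤ Q.length ∧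
        Interior Q ⊆ P.getVert '' Set.Icc e f := by
    rcases hattach with ⟨he, hf'⟩ | ⟨he, hf'⟩
    · exact exists_inducedPath_through_segment hP hind hy hy' hne hnadj hef hf he hf'
    · obtain ⟨Q, hQ, hQind, hQlen, hQint⟩ := exists_inducedPath_through_segment hP hind hy' hy
        hne.symm (fun h => hnadj h.symm) hef hf he hf'
      exact ⟨Q.reverse, hQ.reverse, hQind.reverse, by simpa using hQlen,
        by rwa [interior_reverse]⟩
  exact containsTheta_of_separated_segments hP hind hne hnadj hR ⟨hQ₁, hQ₁ind, hQ₁len⟩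
    ⟨hQ₂, hQ₂ind, hQ₂len⟩ hQ₁int hQ₂int hce hf

def nbrIndices (P : G.Walk p q) (y : V) : Set ℕ := {i | i ≤ P.length ∧ G.Adj y (P.getVert i)}

lemma le_add_one_of_attachments (hth : ¬ ContainsTheta G) (hP : P.IsPath)
    (hind : InducedWalk G P) {y y' : V} (hy : y ∉ P.support) (hy' : y' ∉ P.support)
    (hne : y ≠ y') (hnadj : ¬ G.Adj y y') (hR : LinkedOff G P y y') {m M m' M' : ℕ}
    (hm : m ∈ nbrIndices P y) (hM : M ∈ nbrIndices P y) (hm' : m' ∈ nbrIndices P y')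
    (hM' : M' ∈ nbrIndices P y') (hmm' : m ≤ m') (hwide : m' + 2 ≤ M') : M ≤ m' + 1 := by
  by_contra! h
  refine hth ?_
  rcases le_total M' M with hle | hle
  · exact containsTheta_of_separated_attachments hP hind hy hy' hne hnadj hR hmm' hwide hle
      hM.1 hm.2 hm'.2 (Or.inr ⟨hM'.2, hM.2⟩)
  · exact containsTheta_of_separated_attachments hP hind hy hy' hne hnadj hR hmm' h hle
      hM'.1 hm.2 hm'.2 (Or.inl ⟨hM.2, hM'.2⟩)

end Theta

section Span

variable {p q : V} {P : G.Walk p q} {y : V} {m M : ℕ}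

lemma exists_mem_nbrIndices {x : V} (hx : x ∈ P.support) (hadj : G.Adj y x) :
    ∃ i ∈ nbrIndices P y, P.getVert i = x := by
  obtain ⟨i, rfl, hi⟩ := Walk.mem_support_iff_exists_getVert.1 hx
  exact ⟨i, ⟨hi, hadj⟩, rfl⟩

lemma exists_isLeast_isGreatest_nbrIndices (h : ∃ u ∈ P.support, G.Adj y u) :
    ∃ m M, IsLeast (nbrIndices P y) m ∧ IsGreatest (nbrIndices P y) M := by
  obtain ⟨u, hu, hadj⟩ := h
  obtain ⟨i, hi, -⟩ := exists_mem_nbrIndices hu hadj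
  obtain ⟨m, hm⟩ := (OrderBot.bddBelow (nbrIndices P y)).exists_isLeast_of_nonempty ⟨i, hi⟩
  obtain ⟨M, hM⟩ := BddAbove.exists_isGreatest_of_nonempty ⟨P.length, fun j hj => hj.1⟩ ⟨i, hi⟩
  exact ⟨m, M, hm, hM⟩

lemma existsUnique_adj_of_span_eq (hm : IsLeast (nbrIndices P y) m)
    (hM : IsGreatest (nbrIndices P y) M) (h : M = m) : ∃! u, u ∈ P.support ∧ G.Adj y u := by
  refine ⟨P.getVert m, ⟨P.getVert_mem_support m, hm.1.2⟩, fun x ⟨hx, hadj⟩ => ?_⟩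
  obtain ⟨i, hi, rfl⟩ := exists_mem_nbrIndices hx hadj
  rw [le_antisymm (h ▸ hM.2 hi) (hm.2 hi)]

lemma triangular_of_span_eq_add_one (hm : IsLeast (nbrIndices P y) m)
    (hM : IsGreatest (nbrIndices P y) M) (h : M = m + 1) :
    ∃ u v : V, u ∈ P.support ∧ v ∈ P.support ∧ G.Adj y u ∧ G.Adj y v ∧ u ≠ v ∧ G.Adj u v ∧
      ∀ w ∈ P.support, G.Adj y w → w = u ∨ w = v := by
  have hadj : G.Adj (P.getVert m) (P.getVert M) := h ▸ P.adj_getVert_succ (by grind [hM.1.1])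
  refine ⟨_, _, P.getVert_mem_support m, P.getVert_mem_support M, hm.1.2, hM.1.2, hadj.ne, hadj,
    fun w hw hyw => ?_⟩
  obtain ⟨i, hi, rfl⟩ := exists_mem_nbrIndices hw hyw
  obtain rfl | rfl : i = m ∨ i = M := by grind [hm.2 hi, hM.2 hi]
  exacts [Or.inl rfl, Or.inr rfl]

lemma wide_of_add_two_le_span (hP : P.IsPath) (hind : InducedWalk G P)
    (hm : m ∈ nbrIndices P y) (hM : M ∈ nbrIndices P y) (h : m + 2 ≤ M) :
    ∃ u v : V, u ∈ P.support ∧ v ∈ P.support ∧ G.Adj y u ∧ G.Adj y v ∧ u ≠ v ∧ ¬ G.Adj u v := by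
  refine ⟨_, _, P.getVert_mem_support m, P.getVert_mem_support M, hm.2, hM.2, fun he => ?_,
    hind.not_adj_getVert hP h hM.1⟩
  have := hP.getVert_injOn (show m ≤ P.length by grind [hM.1]) hM.1 he
  omega

lemma adj_getVert_of_span_le_add_one (hm : IsLeast (nbrIndices P y) m)
    (hM : IsGreatest (nbrIndices P y) M) (h : M ≤ m + 1) {i : ℕ} (hi : m ≤ i) (hi' : i ≤ M) :
    G.Adj y (P.getVert i) := by
  obtain rfl | rfl : i = m ∨ i = M := by omega
  exacts [hm.1.2, hM.1.2]

end Span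

lemma exists_ordered_of_card_conflicts_le {α : Type*} (m M : α → ℕ) {B : ℕ} (s : ℕ)
    (C : Finset α) (hmM : ∀ y ∈ C, m y ≤ M y)
    (hB : ∀ y₀ ∈ C, #(C.filter fun y => m y ≤ M y₀ ∧ M y₀ ≤ M y) ≤ B) (hC : s * B < #C + B) :
    ∃ x : Fin s → α, (∀ l, x l ∈ C) ∧ ∀ l l', l < l' → M (x l) < m (x l') := by
  classical
  induction s generalizing C with
  | zero => exact ⟨Fin.elim0, fun l => l.elim0, fun l => l.elim0⟩
  | succ s ih =>
    have hCne : C.Nonempty := card_pos.1 (by rw [Nat.succ_mul] at hC; omega)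
    obtain ⟨y₀, hy₀, hmin⟩ := C.exists_min_image M hCne
    have hnear : #(C.filter fun y => ¬ M y₀ < m y) ≤ B := by
      refine (card_le_card fun y hy => ?_).trans (hB y₀ hy₀)
      rw [mem_filter] at hy ⊢
      exact ⟨hy.1, by omega, hmin y hy.1⟩
    have hsplit := card_filter_add_card_filter_not (s := C) (fun y => M y₀ < m y)
    obtain ⟨x, hxC, hx⟩ := ih (C.filter fun y => M y₀ < m y)
      (fun y hy => hmM y (mem_filter.1 hy).1)
      (fun y hy => (card_le_card (filter_subset_filter _ (filter_subset _ _))).trans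
        (hB y (mem_filter.1 hy).1))
      (by rw [Nat.succ_mul] at hC; omega)
    refine ⟨Fin.cons y₀ x, Fin.cases hy₀ fun l => (mem_filter.1 (hxC l)).1, fun l l' hll' => ?_⟩
    induction l' using Fin.cases with
    | zero => exact absurd hll' (Fin.not_lt_zero l)
    | succ l' =>
      induction l using Fin.cases with
      | zero => exact (mem_filter.1 (hxC l')).2
      | succ l => exact hx l l' (Fin.succ_lt_succ_iff.1 hll')

section Alignment

variable {p q : V} {P : G.Walk p q}

lemma alignmentOrder_of_ordered_spans {s : ℕ} (x : Fin s → V) {X : Finset V}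
    (hxX : ∀ l, x l ∈ X) (hX : ∀ z ∈ X, ∃ l, x l = z) {lo hi : Fin s → ℕ}
    (hlo : ∀ l, IsLeast (nbrIndices P (x l)) (lo l))
    (hhi : ∀ l, IsGreatest (nbrIndices P (x l)) (hi l))
    (hord : ∀ l l', l < l' → hi l < lo l') : AlignmentOrder G P X x := by
  have hinj : Function.Injective x := by
    intro l l' he
    by_contra hne
    rcases lt_or_gt_of_ne hne with h | h
    · exact absurd ((hlo l').2 (he ▸ (hhi l).1)) (hord l l' h).not_ge
    · exact absurd ((hlo l).2 (he ▸ (hhi l').1)) (hord l' l h).not_ge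
  refine ⟨hinj, hxX, hX, lo, hi, fun l => (hlo l).2 (hhi l).1, hord,
    fun l => by simpa [Nat.lt_succ_iff] using (hhi l).1.1, fun l n hadj => ?_⟩
  rw [← Walk.getVert_comp_val_eq_get_support, Function.comp_apply] at hadj
  have hn : (n : ℕ) ∈ nbrIndices P (x l) := ⟨by simpa [Nat.lt_succ_iff] using n.2, hadj⟩
  exact ⟨(hlo l).2 hn, (hhi l).2 hn⟩

lemma exists_alignment_of_card_conflicts_le {Y : Finset V} (hYP : ∀ y ∈ Y, y ∉ P.support)
    {m M : V → ℕ} (hm : ∀ y ∈ Y, IsLeast (nbrIndices P y) (m y))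
    (hM : ∀ y ∈ Y, IsGreatest (nbrIndices P y) (M y)) (φ : V → Prop) [DecidablePred φ]
    {B s : ℕ} (hB : ∀ y₀ ∈ Y.filter φ,
      #((Y.filter φ).filter fun y => m y ≤ M y₀ ∧ M y₀ ≤ M y) ≤ B)
    (hC : s * B < #(Y.filter φ) + B) :
    ∃ S ⊆ Y, #S = s ∧ IsAlignment G P S ∧ ∀ z ∈ S, φ z := by
  classical
  obtain ⟨x, hxC, hx⟩ := exists_ordered_of_card_conflicts_le m M s _
    (fun y hy => (hm y (mem_filter.1 hy).1).2 (hM y (mem_filter.1 hy).1).1) hB hC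
  have hal : AlignmentOrder G P (univ.image x) x := alignmentOrder_of_ordered_spans x
    (by simp) (by simp) (fun l => hm _ (mem_filter.1 (hxC l)).1)
    (fun l => hM _ (mem_filter.1 (hxC l)).1) hx
  have hS : ∀ z ∈ univ.image x, z ∈ Y ∧ φ z := by
    intro z hz
    obtain ⟨l, -, rfl⟩ := mem_image.1 hz
    exact mem_filter.1 (hxC l)
  refine ⟨univ.image x, fun z hz => (hS z hz).1, by simp [card_image_of_injective _ hal.1],
    ⟨fun z hz => hYP z (hS z hz).1, fun z hz => ?_, s, x, hal⟩, fun z hz => (hS z hz).2⟩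
  exact ⟨_, P.getVert_mem_support _, (hm z (hS z hz).1).1.2⟩

end Alignment

section Conflicts

variable {p q : V} {P : G.Walk p q}

lemma card_conflicts_le_ncard_adj {Y C : Finset V} (hCY : C ⊆ Y) {m M : V → ℕ}
    (hm : ∀ y ∈ Y, IsLeast (nbrIndices P y) (m y))
    (hM : ∀ y ∈ Y, IsGreatest (nbrIndices P y) (M y)) (hC : ∀ y ∈ C, M y ≤ m y + 1) (y₀ : V) :
    #(C.filter fun y => m y ≤ M y₀ ∧ M y₀ ≤ M y) ≤
      {y | y ∈ Y ∧ G.Adj (P.getVert (M y₀)) y}.ncard := by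
  rw [← Set.ncard_coe_finset]
  refine Set.ncard_le_ncard (fun y hy => ?_) (Y.finite_toSet.subset fun y hy => hy.1)
  rw [coe_filter, Set.mem_ofPred_eq] at hy
  have hyY := hCY hy.1
  exact ⟨hyY, (adj_getVert_of_span_le_add_one (hm y hyY) (hM y hyY) (hC y hy.1) hy.2.1 hy.2.2).symm⟩

lemma card_conflicts_le_three (hth : ¬ ContainsTheta G) (hP : P.IsPath)
    (hind : InducedWalk G P) {Y C : Finset V} (hCY : C ⊆ Y) (hYP : ∀ y ∈ Y, y ∉ P.support)
    (hstab : StableSet G ↑Y) (hlink : ∀ y ∈ Y, ∀ y' ∈ Y, y ≠ y' → LinkedOff G P y y')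
    {m M : V → ℕ} (hm : ∀ y ∈ Y, m y ∈ nbrIndices P y) (hM : ∀ y ∈ Y, M y ∈ nbrIndices P y)
    (hwide : ∀ y ∈ C, m y + 2 ≤ M y) {y₀ : V} (hy₀ : y₀ ∈ C) :
    #(C.filter fun y => m y ≤ M y₀ ∧ M y₀ ≤ M y) ≤ 3 := by
  classical
  have key : ∀ y ∈ C, ∀ y' ∈ C, y ≠ y' → m y ≤ m y' → M y ≤ m y' + 1 :=
    fun y hy y' hy' hne hle => le_add_one_of_attachments hth hP hind (hYP y (hCY hy))
      (hYP y' (hCY hy')) hne (hstab y (hCY hy) y' (hCY hy') hne) (hlink y (hCY hy) y' (hCY hy') hne)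
      (hm y (hCY hy)) (hM y (hCY hy)) (hm y' (hCY hy')) (hM y' (hCY hy')) hle (hwide y' hy')
  have hinj : Set.InjOn m C := fun y hy y' hy' he => by
    by_contra hne
    have := key y hy y' hy' hne he.le
    have := hwide y hy
    omega
  have hsub : C.filter (fun y => m y ≤ M y₀ ∧ M y₀ ≤ M y) ⊆
      insert y₀ (C.filter fun y => m y ∈ ({M y₀ - 1, M y₀} : Finset ℕ)) := by
    intro y hy
    rw [mem_filter] at hy
    obtain rfl | hne := eq_or_ne y y₀
    · exact mem_insert_self _ _
    refine mem_insert_of_mem (mem_filter.2 ⟨hy.1, ?_⟩)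
    have := hwide y₀ hy₀
    rcases le_total (m y) (m y₀) with hle | hle
    · have := key y hy.1 y₀ hy₀ hne hle
      omega
    · have := key y₀ hy₀ y hy.1 hne.symm hle
      simp only [mem_insert, mem_singleton]
      omega
  calc _ ≤ #(C.filter fun y => m y ∈ ({M y₀ - 1, M y₀} : Finset ℕ)) + 1 :=
        (card_le_card hsub).trans (card_insert_le _ _)
    _ ≤ #({M y₀ - 1, M y₀} : Finset ℕ) + 1 := by
        gcongr
        exact card_le_card_of_injOn m (fun y hy => (mem_filter.1 hy).2)
          (hinj.mono (coe_subset.2 (filter_subset _ _)))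
    _ ≤ 3 := by grw [card_le_two]

end Conflicts

lemma one_of_three_large {s d a b c : ℕ} (hd : 0 < d) (h : 3 * s * (d + 1) ≤ a + b + c) :
    s * (d - 1) < a + (d - 1) ∨ s * (d - 1) < b + (d - 1) ∨ s * 3 < c + 3 := by
  have := Nat.mul_sub_one s d
  have := Nat.le_mul_of_pos_right s hd
  have : 3 * s * (d + 1) = 3 * (s * d) + 3 * s := by ring
  omega

theorem statement_8_general (d s : ℕ) (hd : 0 < d)
    {V : Type} (G : SimpleGraph V)
    (hth : ¬ ContainsTheta G)
    (Y : Finset V) (hstab : StableSet G ↑Y) (hcard : Y.card = 3 * s * (d + 1))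
    {p q : V} (P : G.Walk p q) (hPpath : P.IsPath) (hPind : InducedWalk G P)
    (hdisj : ∀ y ∈ Y, y ∉ P.support)
    (hnbr : ∀ y ∈ Y, ∃ u ∈ P.support, G.Adj y u)
    (hdeg : ∀ u ∈ P.support, ({y : V | y ∈ Y ∧ G.Adj u y}).ncard < d)
    (hconn : ∀ y ∈ Y, ∀ y' ∈ Y, y ≠ y' →
      ∃ (R : G.Walk y y'), R.IsPath ∧ InducedWalk G R ∧
        (∀ w ∈ Interior R, w ∉ P.support) ∧
        (∀ w ∈ Interior R, ∀ u ∈ P.support, ¬ G.Adj w u)) :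
    ∃ S : Finset V, S ⊆ Y ∧ S.card = s ∧ ConsistentAlignment G P S := by
  classical
  choose! m M hm hM using fun y hy => exists_isLeast_isGreatest_nbrIndices (P := P) (hnbr y hy)
  have hsplit : #Y ≤ #(Y.filter fun y => M y = m y) + #(Y.filter fun y => M y = m y + 1) +
      #(Y.filter fun y => m y + 2 ≤ M y) := by
    refine (card_le_card fun y hy => ?_).trans ((card_union_le _ _).trans
      (Nat.add_le_add_right (card_union_le _ _) _))
    have := (hm y hy).2 (hM y hy).1
    simp only [mem_union, mem_filter, hy, true_and]
    omega
  have hnonwide : ∀ C ⊆ Y, (∀ y ∈ C, M y ≤ m y + 1) →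
      ∀ y₀ ∈ C, #(C.filter fun y => m y ≤ M y₀ ∧ M y₀ ≤ M y) ≤ d - 1 :=
    fun C hCY hC y₀ _ => Nat.le_sub_one_of_lt ((card_conflicts_le_ncard_adj hCY hm hM hC y₀
      ).trans_lt (hdeg _ (P.getVert_mem_support _)))
  rcases one_of_three_large hd (hcard ▸ hsplit) with h | h | h
  · obtain ⟨S, hSY, hS, hal, hφ⟩ := exists_alignment_of_card_conflicts_le hdisj hm hM _
      (hnonwide _ (filter_subset _ Y) fun y hy => (mem_filter.1 hy).2.trans_le le_self_add) h
    exact ⟨S, hSY, hS, hal, Or.inr (Or.inl fun z hz =>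
      existsUnique_adj_of_span_eq (hm z (hSY hz)) (hM z (hSY hz)) (hφ z hz))⟩
  · obtain ⟨S, hSY, hS, hal, hφ⟩ := exists_alignment_of_card_conflicts_le hdisj hm hM _
      (hnonwide _ (filter_subset _ Y) fun y hy => (mem_filter.1 hy).2.le) h
    exact ⟨S, hSY, hS, hal, Or.inr (Or.inr fun z hz =>
      triangular_of_span_eq_add_one (hm z (hSY hz)) (hM z (hSY hz)) (hφ z hz))⟩
  · obtain ⟨S, hSY, hS, hal, hφ⟩ := exists_alignment_of_card_conflicts_le hdisj hm hM _
      (fun y₀ hy₀ => card_conflicts_le_three hth hPpath hPind (filter_subset _ Y) hdisj hstab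
        hconn (fun y hy => (hm y hy).1) (fun y hy => (hM y hy).1)
        (fun y hy => (mem_filter.1 hy).2) hy₀) h
    exact ⟨S, hSY, hS, hal, Or.inl fun z hz =>
      wide_of_add_two_le_span hPpath hPind (hm z (hSY hz)).1 (hM z (hSY hz)).1 (hφ z hz)⟩

/-- extracting a consistent alignment (Lemma 6.2). -/
theorem statement_8 (d s : ℕ) (hd : 0 < d) (hs : 0 < s)
    {V : Type} [Fintype V] (G : SimpleGraph V)
    (hth : ¬ ContainsTheta G)
    (Y : Finset V) (hstab : StableSet G ↑Y) (hcard : Y.card = 3 * s * (d + 1))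
    {p q : V} (P : G.Walk p q) (hPpath : P.IsPath) (hPind : InducedWalk G P)
    (hdisj : ∀ y ∈ Y, y ∉ P.support)
    (hnbr : ∀ y ∈ Y, ∃ u ∈ P.support, G.Adj y u)
    (hdeg : ∀ u ∈ P.support, ({y : V | y ∈ Y ∧ G.Adj u y}).ncard < d)
    (hconn : ∀ y ∈ Y, ∀ y' ∈ Y, y ≠ y' →
      ∃ (R : G.Walk y y'), R.IsPath ∧ InducedWalk G R ∧
        (∀ w ∈ Interior R, w ∉ P.support) ∧
        (∀ w ∈ Interior R, ∀ u ∈ P.support, ¬ G.Adj w u)) :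
    ∃ S : Finset V, S ⊆ Y ∧ S.card = s ∧ ConsistentAlignment G P S :=
  statement_8_general d s hd G hth Y hstab hcard P hPpath hPind hdisj hnbr hdeg hconn

end Paper
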